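/- (Residual-matrix identity for the PCA step.) Suppose X = α1_n^T + B F_o^T + B_c(W + 1_nμ^T)^T + E, let F̃_o = Q(1_n)F_o with F̃_o^TF̃_o invertible, and let B̂^T = (F̃_o^TF̃_o)^{−1}F̃_o^TX^T. Then the demeaned adjusted return matrix R := (X − B̂F_o^T)Q(1_n) satisfies R = XQ(F̃_o)Q(1_n) = (B_cW^T + E)Q(F̃_o)Q(1_n); in particular R contains neither the intercept α nor the observed-factor component BF_o^T nor the constant term B_cμ1_n^T. -/

import Mathlib

/-!
Writing `P = Q(1_n)`, the matrix `F̃_o = P F_o` satisfies `P F̃_o = F̃_o`, so `Q(F̃_o)` and `P`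
commute and `Q(F̃_o) P = P - H(F̃_o)`. Since `B̂ F_oᵀ P = B̂ F̃_oᵀ = X H(F̃_o)`, this gives the first
identity. For the second, `Q(F̃_o) P = P Q(F̃_o)` annihilates both `1_nᵀ` (through `P`) and
`F_oᵀ` (as `F_oᵀ P = F̃_oᵀ`, which `Q(F̃_o)` kills), and `X - B_c Wᵀ - E` is a combination of these
two row spaces.
-/

open Matrix

noncomputable section

/-- The projection operator `H(A) = A(AᵀA)⁻¹Aᵀ`. -/
def Hproj {n k : ℕ} (A : Matrix (Fin n) (Fin k) ℝ) : Matrix (Fin n) (Fin n) ℝ :=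
  A * (Aᵀ * A)⁻¹ * Aᵀ

/-- The complement `Q(A) = I − H(A)` of the projection operator. -/
def Qproj {n k : ℕ} (A : Matrix (Fin n) (Fin k) ℝ) : Matrix (Fin n) (Fin n) ℝ :=
  1 - Hproj A

section Projection

variable {n k : ℕ} (A : Matrix (Fin n) (Fin k) ℝ)

lemma Hproj_transpose : (Hproj A)ᵀ = Hproj A := by
  rw [Hproj, transpose_mul, transpose_mul, transpose_transpose, transpose_nonsing_inv,
    transpose_mul, transpose_transpose, Matrix.mul_assoc]

lemma Qproj_transpose : (Qproj A)ᵀ = Qproj A := by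
  rw [Qproj, transpose_sub, transpose_one, Hproj_transpose]

variable {A}

lemma Hproj_mul_self (h : IsUnit (Aᵀ * A)) : Hproj A * A = A := by
  rw [Hproj, Matrix.mul_assoc, Matrix.mul_assoc,
    nonsing_inv_mul _ ((isUnit_iff_isUnit_det _).mp h), Matrix.mul_one]

lemma Qproj_mul_self (h : IsUnit (Aᵀ * A)) : Qproj A * A = 0 := by
  rw [Qproj, Matrix.sub_mul, Matrix.one_mul, Hproj_mul_self h, sub_self]

lemma transpose_mul_Qproj (h : IsUnit (Aᵀ * A)) : Aᵀ * Qproj A = 0 := by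
  rw [← Qproj_transpose, ← transpose_mul, Qproj_mul_self h, transpose_zero]

lemma Qproj_mul_Qproj (h : IsUnit (Aᵀ * A)) : Qproj A * Qproj A = Qproj A := by
  rw [Qproj, Matrix.sub_mul, Matrix.one_mul, ← Qproj, Hproj, Matrix.mul_assoc _ Aᵀ,
    transpose_mul_Qproj h, Matrix.mul_zero, sub_zero]

lemma Hproj_mul_of_transpose_mul_eq {P : Matrix (Fin n) (Fin n) ℝ} (hA : Aᵀ * P = Aᵀ) :
    Hproj A * P = Hproj A := by
  rw [Hproj, Matrix.mul_assoc, hA]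

lemma mul_Hproj_of_mul_eq {P : Matrix (Fin n) (Fin n) ℝ} (hA : P * A = A) :
    P * Hproj A = Hproj A := by
  rw [Hproj, ← Matrix.mul_assoc, ← Matrix.mul_assoc, hA]

end Projection

section SymmetricIdempotent

variable {n k : ℕ} {P : Matrix (Fin n) (Fin n) ℝ} (hPt : Pᵀ = P) (hPP : P * P = P)
  (G : Matrix (Fin n) (Fin k) ℝ)
include hPt hPP

lemma Qproj_mul_eq_sub_Hproj : Qproj (P * G) * P = P - Hproj (P * G) := by
  have h : (P * G)ᵀ * P = (P * G)ᵀ := by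
    rw [← hPt, ← transpose_mul, hPt, ← Matrix.mul_assoc, hPP]
  rw [Qproj, Matrix.sub_mul, Matrix.one_mul, Hproj_mul_of_transpose_mul_eq h]

lemma Qproj_mul_comm : Qproj (P * G) * P = P * Qproj (P * G) := by
  have h : P * (P * G) = P * G := by rw [← Matrix.mul_assoc, hPP]
  rw [Qproj_mul_eq_sub_Hproj hPt hPP, Qproj, Matrix.mul_sub, Matrix.mul_one,
    mul_Hproj_of_mul_eq h]

end SymmetricIdempotent

lemma mul_transpose_eq_mul_Hproj {p n k : ℕ} {X : Matrix (Fin p) (Fin n) ℝ}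
    {F : Matrix (Fin n) (Fin k) ℝ} {Bhat : Matrix (Fin p) (Fin k) ℝ}
    (hBhat : Bhatᵀ = (Fᵀ * F)⁻¹ * Fᵀ * Xᵀ) : Bhat * Fᵀ = X * Hproj F := by
  rw [← transpose_transpose Bhat, hBhat, transpose_mul, transpose_mul, transpose_transpose,
    transpose_nonsing_inv, transpose_mul, transpose_transpose, Hproj, Matrix.mul_assoc X,
    Matrix.mul_assoc]

lemma isUnit_transpose_mul_ones {K : Type*} [Field K] [CharZero K] {n : ℕ} (hn : 0 < n) :
    IsUnit ((of fun _ _ => 1 : Matrix (Fin n) (Fin 1) K)ᵀ *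
      (of fun _ _ => 1 : Matrix (Fin n) (Fin 1) K)) := by
  rw [isUnit_iff_isUnit_det, det_unique, isUnit_iff_ne_zero]
  simp [mul_apply, hn.ne']

lemma vecMulVec_const_one {R : Type*} [CommSemiring R] {m n : ℕ} (v : Fin m → R) :
    vecMulVec v (fun _ => 1) =
      replicateCol (Fin 1) v * (of fun _ _ => 1 : Matrix (Fin n) (Fin 1) R)ᵀ := by
  ext i j
  simp [vecMulVec_apply, mul_apply]

theorem residual_matrix_identity {p n r_o r_c : ℕ} (hn : 0 < n)
    (α : Fin p → ℝ) (μ : Fin r_c → ℝ)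
    (B : Matrix (Fin p) (Fin r_o) ℝ) (Bc : Matrix (Fin p) (Fin r_c) ℝ)
    (Fo : Matrix (Fin n) (Fin r_o) ℝ) (W : Matrix (Fin n) (Fin r_c) ℝ)
    (E : Matrix (Fin p) (Fin n) ℝ)
    (onesMat : Matrix (Fin n) (Fin 1) ℝ) (hones : onesMat = Matrix.of fun _ _ => (1 : ℝ))
    (X : Matrix (Fin p) (Fin n) ℝ)
    (hX : X = vecMulVec α (fun _ => (1 : ℝ)) + B * Foᵀ
        + Bc * (W + vecMulVec (fun _ => (1 : ℝ)) μ)ᵀ + E)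
    (Ftil : Matrix (Fin n) (Fin r_o) ℝ) (hFtil : Ftil = Qproj onesMat * Fo)
    (hinv : IsUnit (Ftilᵀ * Ftil))
    (Bhat : Matrix (Fin p) (Fin r_o) ℝ)
    (hBhat : Bhatᵀ = (Ftilᵀ * Ftil)⁻¹ * Ftilᵀ * Xᵀ)
    (R : Matrix (Fin p) (Fin n) ℝ)
    (hR : R = (X - Bhat * Foᵀ) * Qproj onesMat) :
    R = X * Qproj Ftil * Qproj onesMat ∧
    R = (Bc * Wᵀ + E) * Qproj Ftil * Qproj onesMat := by
  set P := Qproj onesMat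
  have hones_gram : IsUnit (onesMatᵀ * onesMat) := hones ▸ isUnit_transpose_mul_ones hn
  have hPt : Pᵀ = P := Qproj_transpose onesMat
  have hPP : P * P = P := Qproj_mul_Qproj hones_gram
  have hFoP : Foᵀ * P = Ftilᵀ := by rw [hFtil, transpose_mul, hPt]
  have hcomm : Qproj Ftil * P = P * Qproj Ftil := hFtil ▸ Qproj_mul_comm hPt hPP Fo
  have hfirst : R = X * Qproj Ftil * P := by
    rw [hR, Matrix.mul_assoc X, hFtil, Qproj_mul_eq_sub_Hproj hPt hPP, ← hFtil,
      Matrix.sub_mul, Matrix.mul_assoc Bhat, hFoP, mul_transpose_eq_mul_Hproj hBhat,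
      Matrix.mul_sub]
  have hFo_kill : Foᵀ * (Qproj Ftil * P) = 0 := by
    rw [hcomm, ← Matrix.mul_assoc, hFoP, transpose_mul_Qproj hinv]
  have hones_kill : onesMatᵀ * (Qproj Ftil * P) = 0 := by
    rw [hcomm, ← Matrix.mul_assoc, transpose_mul_Qproj hones_gram, Matrix.zero_mul]
  have hX' : X = (replicateCol (Fin 1) α + Bc * replicateCol (Fin 1) μ) * onesMatᵀ
      + B * Foᵀ + (Bc * Wᵀ + E) := by
    rw [hX, hones, transpose_add, transpose_vecMulVec, vecMulVec_const_one, vecMulVec_const_one]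
    simp only [Matrix.mul_add, Matrix.add_mul, Matrix.mul_assoc]
    abel
  refine ⟨hfirst, ?_⟩
  rw [hfirst, hX', Matrix.mul_assoc, Matrix.mul_assoc, Matrix.add_mul, Matrix.add_mul,
    Matrix.mul_assoc, hones_kill, Matrix.mul_assoc B, hFo_kill, Matrix.mul_zero, Matrix.mul_zero,
    zero_add, zero_add]
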